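/- For a finite group Γ and any permutation ℤΓ-module F, the group H²(Γ, F) is annihilated by the exponent exp(Γ), i.e., exp(Γ)·x = 0 for all x ∈ H²(Γ, F). -/

import Mathlib

open CategoryTheory CategoryTheory.Limits groupCohomology

/-- A permutation `ℤΓ`-module: one isomorphic to `ℤ[X]` for some `Γ`-set `X`. -/
def IsPermutationModule {Γ : Type} [Group Γ] (F : Rep ℤ Γ) : Prop :=
  ∃ (X : Type) (_ : MulAction Γ X), Nonempty (F ≅ Rep.ofMulAction ℤ Γ X)

/-- A permutation projective module: a direct summand of a permutation module. -/
def IsPermutationProjective {Γ : Type} [Group Γ] (M : Rep.{0} ℤ Γ) : Prop :=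
  ∃ F : Rep.{0} ℤ Γ, IsPermutationModule F ∧ ∃ (i : M ⟶ F) (r : F ⟶ M), i ≫ r = 𝟙 M

/-- A coflasque module: `ℤ`-free with vanishing `H¹(Γ', M)` for all subgroups `Γ' ≤ Γ`. -/
def IsCoflasque {Γ : Type} [Group Γ] (M : Rep.{0} ℤ Γ) : Prop :=
  (@Module.Free ℤ M.V _ _ M.hV2) ∧
    ∀ Γ' : Subgroup Γ,
      Subsingleton (H1 (Rep.res Γ'.subtype M))

/-- A permutation presentation of `M`: an exact sequence `0 → F → F → M → 0`
with `F` a permutation module. -/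
def HasPermutationPresentation {Γ : Type} [Group Γ] (M : Rep.{0} ℤ Γ) : Prop :=
  ∃ (F : Rep.{0} ℤ Γ) (_ : IsPermutationModule F) (f : F ⟶ F) (π : F ⟶ M),
    Function.Injective f.hom ∧ Function.Surjective π.hom ∧ Function.Exact f.hom π.hom

/-- `π` is `H⁰`-surjective if it is surjective on `Γ'`-invariants for every subgroup `Γ'`. -/
def IsH0Surjective {Γ : Type} [Group Γ] {M N : Rep.{0} ℤ Γ} (π : M ⟶ N) : Prop :=
  ∀ Γ' : Subgroup Γ, ∀ n : N, (∀ γ : Γ', N.ρ ↑γ n = n) →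
    ∃ m : M, (∀ γ : Γ', M.ρ ↑γ m = m) ∧ π.hom m = n

/-! Averaging a `ℤ[X]`-valued 2-cocycle `f` over its second variable gives a rational cochain `C`
with `δC = f`, so `C` mod `ℤ` is a 1-cocycle with values in the functions `X → ℚ/ℤ`. Restricted
to the stabiliser of a point `x`, `g ↦ C g x` mod `ℤ` is a homomorphism to `ℚ/ℤ`, hence killed by
`exp Γ`; transporting this along a choice of orbit representatives shows that `exp Γ • C` differs
from an integral cochain `β` by a coboundary, and then `δβ = exp Γ • f`. -/

section

variable {Γ X : Type*}

noncomputable def averageCochain [Fintype Γ] (f : Γ × Γ → X → ℚ) (g : Γ) (x : X) : ℚ :=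
  (Fintype.card Γ : ℚ)⁻¹ * ∑ h, f (g, h) x

theorem averageCochain_apply_eq_zero [Fintype Γ] {f : Γ × Γ → X → ℚ} {x : X}
    (hx : ∀ p, f p x = 0) (g : Γ) : averageCochain f g x = 0 := by
  simp [averageCochain, hx]

variable [Group Γ] [MulAction Γ X]

theorem averageCochain_coboundary [Fintype Γ] {f : Γ × Γ → X → ℚ}
    (hf : ∀ g h j x, f (h, j) (g⁻¹ • x) - f (g * h, j) x + f (g, h * j) x - f (g, h) x = 0)
    (g h : Γ) (x : X) :
    averageCochain f h (g⁻¹ • x) - averageCochain f (g * h) x + averageCochain f g x =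
      f (g, h) x := by
  have hsum := Finset.sum_eq_zero (s := Finset.univ) fun j _ => hf g h j x
  have hshift : ∑ j, f (g, h * j) x = ∑ j, f (g, j) x :=
    Equiv.sum_comp (Equiv.mulLeft h) fun j => f (g, j) x
  rw [Finset.sum_sub_distrib, Finset.sum_add_distrib, Finset.sum_sub_distrib, hshift,
    Finset.sum_const, Finset.card_univ, nsmul_eq_mul] at hsum
  have hcard : (Fintype.card Γ : ℚ) ≠ 0 := by exact_mod_cast Fintype.card_ne_zero
  simp only [averageCochain]
  field_simp
  linear_combination hsum

theorem MulAction.exists_orbit_section :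
    ∃ (r : X → X) (σ : X → Γ), (∀ (g : Γ) x, r (g • x) = r x) ∧ ∀ x, σ x • r x = x := by
  let r : X → X := fun x => (Quotient.mk (orbitRel Γ X) x).out
  have hr : ∀ x, ∃ g : Γ, g • r x = x := fun x => by
    obtain ⟨g, hg⟩ := Quotient.mk_out (s := orbitRel Γ X) x
    exact ⟨g⁻¹, inv_smul_eq_iff.mpr hg.symm⟩
  choose σ hσ using hr
  refine ⟨r, σ, fun g x => ?_, hσ⟩
  simp only [r, Quotient.sound (orbitRel_apply.mpr (mem_orbit x g))]

section CoinducedCocycle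

variable {A : Type*} [AddCommGroup A] {u : Γ → X → A}

theorem cocycle_one_apply (hu : ∀ g h x, u (g * h) x = u h (g⁻¹ • x) + u g x) (x : X) :
    u 1 x = 0 := by
  simpa using hu 1 1 x

theorem cocycle_pow_apply_of_smul_eq (hu : ∀ g h x, u (g * h) x = u h (g⁻¹ • x) + u g x)
    {h : Γ} {x : X} (hx : h • x = x) (k : ℕ) : u (h ^ k) x = k • u h x := by
  induction k with
  | zero => simpa using cocycle_one_apply hu x
  | succ k ih => rw [pow_succ', hu, inv_smul_eq_iff.mpr hx.symm, ih, succ_nsmul]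

theorem exponent_nsmul_cocycle_apply_eq_zero_of_smul_eq
    (hu : ∀ g h x, u (g * h) x = u h (g⁻¹ • x) + u g x) {h : Γ} {x : X} (hx : h • x = x) :
    Monoid.exponent Γ • u h x = 0 := by
  rw [← cocycle_pow_apply_of_smul_eq hu hx, Monoid.pow_exponent_eq_one, cocycle_one_apply hu]

/-- `exp Γ • u` is the coboundary of `x ↦ -exp Γ • u (σ x) x`. -/
theorem exponent_nsmul_cocycle_apply (hu : ∀ g h x, u (g * h) x = u h (g⁻¹ • x) + u g x)
    {r : X → X} {σ : X → Γ} (hr : ∀ (g : Γ) x, r (g • x) = r x) (hσ : ∀ x, σ x • r x = x)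
    (g : Γ) (x : X) :
    Monoid.exponent Γ • u g x =
      Monoid.exponent Γ • u (σ x) x - Monoid.exponent Γ • u (σ (g⁻¹ • x)) (g⁻¹ • x) := by
  set y := g⁻¹ • x
  have hry : r y = r x := by rw [← hr g y, smul_inv_smul]
  have hstab : ((σ x)⁻¹ * g * σ y) • r x = r x := by
    rw [mul_smul, mul_smul, ← hry, hσ, smul_inv_smul, inv_smul_eq_iff, hry, hσ]
  have h₁ := hu g (σ y) x
  have h₂ := hu (σ x) ((σ x)⁻¹ * g * σ y) x
  rw [show σ x * ((σ x)⁻¹ * g * σ y) = g * σ y by group,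
    inv_smul_eq_iff.mpr (hσ x).symm] at h₂
  calc Monoid.exponent Γ • u g x
      = Monoid.exponent Γ • (u ((σ x)⁻¹ * g * σ y) (r x) + u (σ x) x - u (σ y) y) := by
        rw [← h₂, h₁, add_sub_cancel_left]
    _ = _ := by
        rw [nsmul_sub, nsmul_add, exponent_nsmul_cocycle_apply_eq_zero_of_smul_eq hu hstab,
          zero_add]

end CoinducedCocycle

theorem Rat.coe_quotient_intCast_range_eq_zero_iff (q : ℚ) :
    (q : ℚ ⧸ (Int.castAddHom ℚ).range) = 0 ↔ q.den = 1 := by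
  rw [QuotientAddGroup.eq_zero_iff, AddMonoidHom.mem_range, Rat.den_eq_one_iff]
  exact ⟨fun ⟨m, hm⟩ => hm ▸ by simp, fun h => ⟨q.num, h⟩⟩

theorem den_exponent_mul_cochain_add_sub_eq_one {C : Γ → X → ℚ}
    (hC : ∀ g h x, (C h (g⁻¹ • x) - C (g * h) x + C g x).den = 1)
    {r : X → X} {σ : X → Γ} (hr : ∀ (g : Γ) x, r (g • x) = r x) (hσ : ∀ x, σ x • r x = x)
    (g : Γ) (x : X) :
    (Monoid.exponent Γ * C g x + Monoid.exponent Γ * C (σ (g⁻¹ • x)) (g⁻¹ • x) -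
      Monoid.exponent Γ * C (σ x) x).den = 1 := by
  let u : Γ → X → ℚ ⧸ (Int.castAddHom ℚ).range := fun g x => C g x
  have hu : ∀ g h x, u (g * h) x = u h (g⁻¹ • x) + u g x := by
    intro g h x
    rw [← sub_eq_zero, ← QuotientAddGroup.mk_add, ← QuotientAddGroup.mk_sub,
      Rat.coe_quotient_intCast_range_eq_zero_iff, ← Rat.den_neg_eq_den]
    convert hC g h x using 2
    ring
  have := exponent_nsmul_cocycle_apply hu hr hσ g x
  simp only [u, ← QuotientAddGroup.mk_nsmul, ← QuotientAddGroup.mk_sub, nsmul_eq_mul] at this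
  rw [← Rat.coe_quotient_intCast_range_eq_zero_iff, QuotientAddGroup.mk_sub,
    QuotientAddGroup.mk_add, this, QuotientAddGroup.mk_sub]
  abel

theorem exists_coboundary_eq_exponent_mul_of_cocycle [Finite Γ] (f : Γ × Γ → X →₀ ℤ)
    (hf : ∀ g h j x, f (h, j) (g⁻¹ • x) - f (g * h, j) x + f (g, h * j) x - f (g, h) x = 0) :
    ∃ β : Γ → X →₀ ℤ, ∀ g h x,
      β h (g⁻¹ • x) - β (g * h) x + β g x = Monoid.exponent Γ * f (g, h) x := by
  have := Fintype.ofFinite Γ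
  obtain ⟨r, σ, hr, hσ⟩ := MulAction.exists_orbit_section (Γ := Γ) (X := X)
  set n := Monoid.exponent Γ
  set C := averageCochain fun p x => (f p x : ℚ)
  have hC : ∀ g h x, C h (g⁻¹ • x) - C (g * h) x + C g x = f (g, h) x :=
    averageCochain_coboundary fun g h j x => by exact_mod_cast hf g h j x
  let B : Γ → X → ℚ := fun g x => n * C g x + n * C (σ (g⁻¹ • x)) (g⁻¹ • x) - n * C (σ x) x
  have hB : ∀ g h x, B h (g⁻¹ • x) - B (g * h) x + B g x = n * f (g, h) x := by
    intro g h x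
    simp only [B, mul_inv_rev, mul_smul]
    linear_combination (n : ℚ) * hC g h x
  have hB_den : ∀ g x, (B g x).den = 1 :=
    den_exponent_mul_cochain_add_sub_eq_one (fun g h x => by rw [hC]; exact Rat.den_intCast _)
      hr hσ
  let T : Set X := ⋃ p, ↑(f p).support
  have hT : T.Finite := Set.finite_iUnion fun p => (f p).support.finite_toSet
  have hC_zero : ∀ x ∉ T, ∀ g, C g x = 0 := by
    intro x hx
    simp only [T, Set.mem_iUnion, Finset.mem_coe, Finsupp.mem_support_iff, not_exists,
      not_not] at hx
    exact averageCochain_apply_eq_zero fun p => by simp [hx p]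
  have hB_support : ∀ g, (Function.support (B g)).Finite := by
    intro g
    refine (hT.union (hT.smul_set (a := g))).subset fun x hx => ?_
    by_contra hxT
    simp only [Set.mem_union, Set.mem_smul_set_iff_inv_smul_mem, not_or] at hxT
    exact hx (by simp [B, hC_zero x hxT.1, hC_zero _ hxT.2])
  refine ⟨fun g => Finsupp.ofSupportFinite (fun x => (B g x).num) ?_, fun g h x => ?_⟩
  · simpa only [Function.support, ne_eq, Rat.num_eq_zero] using hB_support g
  · have hnum : ∀ g x, ((B g x).num : ℚ) = B g x := fun g x =>
      Rat.coe_int_num_of_den_eq_one (hB_den g x)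
    have hB' := hB g h x
    rw [← hnum h, ← hnum (g * h), ← hnum g] at hB'
    simp only [Finsupp.ofSupportFinite_coe]
    exact_mod_cast hB'

end

theorem exponent_nsmul_H2_ofMulAction_eq_zero {Γ X : Type} [Group Γ] [MulAction Γ X]
    [Finite Γ] (x : H2 (Rep.ofMulAction ℤ Γ X)) : Monoid.exponent Γ • x = 0 := by
  induction x using H2_induction_on with | h f => ?_
  have hf : ∀ g h j x, (f (h, j)).coeff (g⁻¹ • x) - (f (g * h, j)).coeff x +
      (f (g, h * j)).coeff x - (f (g, h)).coeff x = 0 := by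
    intro g h j x
    have := congr(($((mem_cocycles₂_def f).mp f.2 g h j)).coeff x)
    simpa [Representation.coeff_ofMulAction] using this
  obtain ⟨β, hβ⟩ := exists_coboundary_eq_exponent_mul_of_cocycle (fun p => (f p).coeff) hf
  rw [← map_nsmul, H2π_eq_zero_iff]
  refine ⟨fun g => MonoidAlgebra.ofCoeff (β g), funext fun ⟨g, h⟩ => ?_⟩
  change _ = Monoid.exponent Γ • f (g, h)
  ext x
  simp [Representation.coeff_ofMulAction, hβ]

theorem exponent_smul_h2_of_permutation (Γ : Type) [Group Γ] [Finite Γ] (F : Rep ℤ Γ)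
    (hF : IsPermutationModule F) (x : H2 F) : Monoid.exponent Γ • x = 0 := by
  obtain ⟨X, _, ⟨e⟩⟩ := hF
  have hx : map (.id Γ) e.inv 2 (map (.id Γ) e.hom 2 x) = x := by
    rw [← ModuleCat.comp_apply, ← map_id_comp, e.hom_inv_id, map_id, ModuleCat.id_apply]
  rw [← hx, ← map_nsmul, exponent_nsmul_H2_ofMulAction_eq_zero, map_zero]
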